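/- (Theorem 5.1, zero-range system in a Jackson-type environment, closed-open network, detailed balance) Fix M ≥ 1. Suppose for every y : Λ → ℕ: (4.2a) λ_k(n_k−1;y)/μ_k(n_k;y)·β_{kl}(n_k,n_l;y) = λ_l(n_l;y)/μ_l(n_l+1;y)·β_{lk}(n_l+1,n_k−1;y) for k ≠ l, y_k = y_l = 0, n_k ≥ 1; (4.2b) λ_j(n_j−1;y)/μ_j(n_j;y)·θ_{jk}(n_j,n_k;y) = λ_k(n_k;y)/μ_k(n_k+1;y)·θ_{kj}(n_k+1,n_j−1;y) for y_j ≥ 1, y_k = 0, n_j ≥ 1; (4.3) τ_{jj'}(n;y)·∏_{q∈Λ} λ̄_q(n_q;y)/μ̄_q(n_q;y) = τ_{j'j}(n;y+e^{j→j'})·∏_{q∈Λ} λ̄_q(n_q;y+e^{j→j'})/μ̄_q(n_q;y+e^{j→j'}) for y_j ≥ 1, j' ≠ j; (5.2) λ_i(n_i−1;y)·[γ_i(n_i−1)]^{y_i}/μ_i(n_i;y)·ε_{ij}(n_i,n_j;y) = λ_j(n_j;y)·[γ_j(n_j)]^{y_j}/μ_j(n_j+1;y)·ε_{ji}(n_j+1,n_i−1;y)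 for i ≠ j, y_i ≥ 1, y_j ≥ 1, n_i ≥ 1. Then the weight w(y,n) = 1(|y| = M)·∏_{q∈Λ} [λ̄_q(n_q;y)/μ̄_q(n_q;y)]·∏_{q∈Λ} [γ̄_q(n_q)]^{y_q} satisfies the detailed balance equations: (i) w(y,n)·λ_p(n_p;y)·[γ_p(n_p)]^{y_p} = w(y, n+e^p)·μ_p(n_p+1;y) for every p ∈ Λ; (ii) w(y,n)·β_{kl}(n_k,n_l;y) = w(y, n+e^{k→l})·β_{lk}(n_l+1,n_k−1;y) for y_k = y_l = 0, k ≠ l, n_k ≥ 1; (iii) w(y,n)·ε_{ij}(n_i,n_j;y) = w(y, n+e^{i→j})·ε_{ji}(n_j+1,n_i−1;y) for y_i ≥ 1, y_j ≥ 1, i ≠ j, n_i ≥ 1; (iv) w(y,n)·θ_{jk}(n_j,n_k;y) = w(y, n+e^{j→k})·θ_{kj}(n_k+1,n_j−1;y)·[γ_j(n_j−1)]^{y_j} for y_j ≥ 1, y_k = 0, n_j ≥ 1; (v) w(y,n)·[γ̄_j(n_j)]^{−y_j}·τ_{jj'}(n;y)·[γ̄_{j'}(n_{j'})]^{−y_{j'}}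 = w(y', n)·[γ̄_j(n_j)]^{−y'_j}·τ_{j'j}(n;y')·[γ̄_{j'}(n_{j'})]^{−y'_{j'}}, where y' = y + e^{j→j'}, for y_j ≥ 1, j' ≠ j. -/

import Mathlib

/-!
The weight is a product over sites, `w(y, n) = 1(|y| = M) ∏_q φ_q(n_q)` with
`φ_q(m) = λ̄_q(m)/μ̄_q(m) · γ̄_q(m)^{y_q}`, and each factor grows by the ratio
`φ_q(m+1) = φ_q(m) · λ_q(m) γ_q(m)^{y_q} / μ_q(m+1)`. A move of `n` touches at most two
factors, so each of the balance equations (i)–(iv) reduces to the corresponding local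
condition on these ratios, which is (4.2a), (5.2) or (4.2b) (the `γ` powers disappear at
sites with `y_q = 0`). For (v), `n` is fixed and the leap preserves `|y|`; dividing out the
`γ̄` factors at `j` and `j'` leaves the common part of `∏_q γ̄_q(n_q)^{y_q}`, and (4.3) does
the rest.
-/

/-- The `e^k` configuration increment: `n + e^k`. -/
def bump {Λ : Type*} [DecidableEq Λ] (n : Λ → ℕ) (k : Λ) : Λ → ℕ :=
  fun l => n l + (if l = k then 1 else 0)

/-- The jump move `n + e^{i→k} = n - e^i + e^k`. -/
def move {Λ : Type*} [DecidableEq Λ] (n : Λ → ℕ) (i k : Λ) : Λ → ℕ :=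
  fun l => n l - (if l = i then 1 else 0) + (if l = k then 1 else 0)

section Moves

variable {Λ : Type*} [DecidableEq Λ] {n : Λ → ℕ}

@[simp]
lemma bump_apply_self (p : Λ) : bump n p p = n p + 1 := by
  simp [bump]

lemma bump_apply_of_ne {p q : Λ} (hq : q ≠ p) : bump n p q = n q := by
  simp [bump, hq]

lemma move_apply_left {i k : Λ} (hik : i ≠ k) : move n i k i = n i - 1 := by
  simp [move, hik]

lemma move_apply_right {i k : Λ} (hik : i ≠ k) : move n i k k = n k + 1 := by
  simp [move, hik.symm]

lemma move_apply_of_ne {i k q : Λ} (hqi : q ≠ i) (hqk : q ≠ k) : move n i k q = n q := by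
  simp [move, hqi, hqk]

lemma sum_move [Fintype Λ] {i : Λ} (k : Λ) (hn : 1 ≤ n i) :
    ∑ q, move n i k q = ∑ q, n q := by
  have hpoint : ∀ q, move n i k q + (if q = i then 1 else 0) = n q + (if q = k then 1 else 0) := by
    intro q
    by_cases hqi : q = i
    · subst hqi; simp only [move, if_true]; omega
    · simp [move, hqi]
  have hsum := Finset.sum_congr rfl fun q (_ : q ∈ Finset.univ) => hpoint q
  simp only [Finset.sum_add_distrib, Finset.sum_ite_eq', Finset.mem_univ, if_true] at hsum
  omega

end Moves

section ProductForm

open Finset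

variable {Λ M : Type*} [Fintype Λ] [DecidableEq Λ] [CommMonoid M]

lemma prod_eq_mul_mul_prod_erase_erase (f : Λ → M) {i k : Λ} (hik : i ≠ k) :
    ∏ q, f q = f i * f k * ∏ q ∈ (univ.erase i).erase k, f q := by
  rw [← mul_prod_erase univ f (mem_univ i),
    ← mul_prod_erase _ f (mem_erase.2 ⟨hik.symm, mem_univ k⟩), mul_assoc]

lemma prod_apply_bump (F : Λ → ℕ → M) (n : Λ → ℕ) (p : Λ) :
    ∏ q, F q (bump n p q) = F p (n p + 1) * ∏ q ∈ univ.erase p, F q (n q) := by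
  rw [← mul_prod_erase univ _ (mem_univ p), bump_apply_self]
  congr 1
  exact prod_congr rfl fun q hq => by rw [bump_apply_of_ne (ne_of_mem_erase hq)]

lemma prod_apply_move (F : Λ → ℕ → M) (n : Λ → ℕ) {i k : Λ} (hik : i ≠ k) :
    ∏ q, F q (move n i k q) =
      F i (n i - 1) * F k (n k + 1) * ∏ q ∈ (univ.erase i).erase k, F q (n q) := by
  rw [prod_eq_mul_mul_prod_erase_erase _ hik, move_apply_left hik, move_apply_right hik]
  congr 1
  refine prod_congr rfl fun q hq => ?_
  rw [move_apply_of_ne (ne_of_mem_erase (mem_of_mem_erase hq)) (ne_of_mem_erase hq)]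

variable {F r : Λ → ℕ → M}

lemma prod_mul_eq_prod_apply_bump_mul (hF : ∀ q m, F q (m + 1) = F q m * r q m)
    (n : Λ → ℕ) (p : Λ) {a b : M} (h : a = r p (n p) * b) :
    (∏ q, F q (n q)) * a = (∏ q, F q (bump n p q)) * b := by
  rw [prod_apply_bump, ← mul_prod_erase univ _ (mem_univ p), hF, h]
  ac_rfl

lemma prod_mul_eq_prod_apply_move_mul (hF : ∀ q m, F q (m + 1) = F q m * r q m)
    {n : Λ → ℕ} {i k : Λ} (hik : i ≠ k) (hn : 1 ≤ n i) {a b : M}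
    (h : r i (n i - 1) * a = r k (n k) * b) :
    (∏ q, F q (n q)) * a = (∏ q, F q (move n i k q)) * b := by
  obtain ⟨m, hm⟩ : ∃ m, n i = m + 1 := ⟨n i - 1, by omega⟩
  rw [prod_apply_move _ _ hik, prod_eq_mul_mul_prod_erase_erase _ hik, hm, hF, hF,
    Nat.add_sub_cancel]
  rw [hm, Nat.add_sub_cancel] at h
  set R := ∏ q ∈ (univ.erase i).erase k, F q (n q)
  calc F i m * r i m * F k (n k) * R * a = F i m * F k (n k) * R * (r i m * a) := by ac_rfl
    _ = F i m * F k (n k) * R * (r k (n k) * b) := by rw [h]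
    _ = F i m * (F k (n k) * r k (n k)) * R * b := by ac_rfl

lemma prod_pow_mul_inv_mul_inv_eq_of_eq_off {G₀ : Type*} [CommGroupWithZero G₀]
    {G : Λ → G₀} (hG : ∀ q, G q ≠ 0) {y y' : Λ → ℕ} {j j' : Λ} (hjj' : j ≠ j')
    (hyy' : ∀ q, q ≠ j → q ≠ j' → y q = y' q) :
    (∏ q, G q ^ y q) * (G j ^ y j)⁻¹ * (G j' ^ y j')⁻¹ =
      (∏ q, G q ^ y' q) * (G j ^ y' j)⁻¹ * (G j' ^ y' j')⁻¹ := by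
  have hsplit : ∀ z : Λ → ℕ, (∏ q, G q ^ z q) * (G j ^ z j)⁻¹ * (G j' ^ z j')⁻¹ =
      ∏ q ∈ (univ.erase j).erase j', G q ^ z q := by
    intro z
    rw [prod_eq_mul_mul_prod_erase_erase _ hjj']
    field_simp [pow_ne_zero _ (hG j), pow_ne_zero _ (hG j')]
  rw [hsplit, hsplit]
  exact prod_congr rfl fun q hq =>
    by rw [hyy' q (ne_of_mem_erase (mem_of_mem_erase hq)) (ne_of_mem_erase hq)]

end ProductForm

theorem zero_range_closed_open_detailed_balance_general
    (Λ : Type*) [Fintype Λ] [DecidableEq Λ]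
    (M : ℕ)
    (lam mu : Λ → ℕ → (Λ → ℕ) → ℝ) (gam : Λ → ℕ → ℝ)
    (hmu : ∀ p m y, 0 < mu p m y)
    (hgam : ∀ p m, 0 < gam p m)
    (lamBar muBar : Λ → ℕ → (Λ → ℕ) → ℝ) (gamBar : Λ → ℕ → ℝ)
    (hlamBar : ∀ p m y, lamBar p m y = ∏ u ∈ Finset.range m, lam p u y)
    (hmuBar : ∀ p m y, muBar p m y = ∏ u ∈ Finset.range m, mu p (u + 1) y)
    (hgamBar : ∀ p m, gamBar p m = ∏ u ∈ Finset.range m, gam p u)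
    (β θ ε : Λ → Λ → ℕ → ℕ → (Λ → ℕ) → ℝ) (τ : Λ → Λ → (Λ → ℕ) → (Λ → ℕ) → ℝ)
    -- (4.2a)
    (h42a : ∀ (y : Λ → ℕ) (k l : Λ) (a b : ℕ),
      k ≠ l → y k = 0 → y l = 0 → 1 ≤ a →
      lam k (a - 1) y / mu k a y * β k l a b y =
        lam l b y / mu l (b + 1) y * β l k (b + 1) (a - 1) y)
    -- (4.2b)
    (h42b : ∀ (y : Λ → ℕ) (j k : Λ) (a b : ℕ),
      1 ≤ y j → y k = 0 → 1 ≤ a →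
      lam j (a - 1) y / mu j a y * θ j k a b y =
        lam k b y / mu k (b + 1) y * θ k j (b + 1) (a - 1) y)
    -- (4.3)
    (h43 : ∀ (y : Λ → ℕ) (j j' : Λ) (n : Λ → ℕ),
      1 ≤ y j → j' ≠ j →
      τ j j' n y * ∏ q, lamBar q (n q) y / muBar q (n q) y =
        τ j' j n (move y j j') *
          ∏ q, lamBar q (n q) (move y j j') / muBar q (n q) (move y j j'))
    -- (5.2)
    (h52 : ∀ (y : Λ → ℕ) (i j : Λ) (a b : ℕ),
      i ≠ j → 1 ≤ y i → 1 ≤ y j → 1 ≤ a →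
      lam i (a - 1) y * gam i (a - 1) ^ (y i) / mu i a y * ε i j a b y =
        lam j b y * gam j b ^ (y j) / mu j (b + 1) y * ε j i (b + 1) (a - 1) y)
    (w : (Λ → ℕ) → (Λ → ℕ) → ℝ)
    (hw : ∀ (y n : Λ → ℕ), w y n =
      (if ∑ s, y s = M then (1 : ℝ) else 0) *
        (∏ q, lamBar q (n q) y / muBar q (n q) y) *
        ∏ q, gamBar q (n q) ^ (y q)) :
    ∀ (y n : Λ → ℕ),
      -- (i) arrival at p paired with exit from p
      (∀ p, w y n * (lam p (n p) y * gam p (n p) ^ (y p)) =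
        w y (bump n p) * mu p (n p + 1) y) ∧
      -- (ii) task jump between unloaded sites
      (∀ k l, y k = 0 → y l = 0 → k ≠ l → 1 ≤ n k →
        w y n * β k l (n k) (n l) y =
          w y (move n k l) * β l k (n l + 1) (n k - 1) y) ∧
      -- (iii) task jump between loaded sites
      (∀ i j, 1 ≤ y i → 1 ≤ y j → i ≠ j → 1 ≤ n i →
        w y n * ε i j (n i) (n j) y =
          w y (move n i j) * ε j i (n j + 1) (n i - 1) y) ∧
      -- (iv) task jump from a loaded to an unloaded site
      (∀ j k, 1 ≤ y j → y k = 0 → 1 ≤ n j →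
        w y n * θ j k (n j) (n k) y =
          w y (move n j k) *
            (θ k j (n k + 1) (n j - 1) y * gam j (n j - 1) ^ (y j))) ∧
      -- (v) leap of a distinguished customer
      (∀ j j', 1 ≤ y j → j' ≠ j →
        w y n * (gamBar j (n j) ^ (y j))⁻¹ * τ j j' n y *
            (gamBar j' (n j') ^ (y j'))⁻¹ =
          w (move y j j') n * (gamBar j (n j) ^ (move y j j' j))⁻¹ *
            τ j' j n (move y j j') *
            (gamBar j' (n j') ^ (move y j j' j'))⁻¹) := by
  intro y n
  set I : ℝ := if ∑ s, y s = M then 1 else 0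
  set φ : Λ → ℕ → ℝ := fun q m => lamBar q m y / muBar q m y * gamBar q m ^ y q
  set r : Λ → ℕ → ℝ := fun q m => lam q m y * gam q m ^ y q / mu q (m + 1) y
  have hw' : ∀ n, w y n = I * ∏ q, φ q (n q) := fun n => by
    rw [hw, mul_assoc, ← Finset.prod_mul_distrib]
  have hφ : ∀ q m, φ q (m + 1) = φ q m * r q m := fun q m => by
    simp only [φ, r, hlamBar, hmuBar, hgamBar, Finset.prod_range_succ]
    ring
  refine ⟨fun p => ?_, fun k l hyk hyl hkl hnk => ?_, fun i j hyi hyj hij hni => ?_,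
    fun j k hyj hyk hnj => ?_, fun j j' hyj hjj' => ?_⟩
  · rw [hw', hw', mul_assoc, mul_assoc, prod_mul_eq_prod_apply_bump_mul hφ]
    simp only [r, div_mul_cancel₀ _ (hmu p (n p + 1) y).ne']
  · rw [hw', hw', mul_assoc, mul_assoc, prod_mul_eq_prod_apply_move_mul hφ hkl hnk]
    simpa [r, hyk, hyl, Nat.sub_add_cancel hnk] using h42a y k l (n k) (n l) hkl hyk hyl hnk
  · rw [hw', hw', mul_assoc, mul_assoc, prod_mul_eq_prod_apply_move_mul hφ hij hni]
    simpa [r, Nat.sub_add_cancel hni] using h52 y i j (n i) (n j) hij hyi hyj hni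
  · have hjk : j ≠ k := by rintro rfl; omega
    rw [hw', hw', mul_assoc, mul_assoc, prod_mul_eq_prod_apply_move_mul hφ hjk hnj]
    have h := h42b y j k (n j) (n k) hyj hyk hnj
    simp only [r, hyk, pow_zero, mul_one, Nat.sub_add_cancel hnj] at h ⊢
    linear_combination gam j (n j - 1) ^ y j * h
  · have hw_leap : ∀ (z : Λ → ℕ) (t : ℝ),
        w z n * (gamBar j (n j) ^ z j)⁻¹ * t * (gamBar j' (n j') ^ z j')⁻¹ =
          (if ∑ s, z s = M then 1 else 0) * (t * ∏ q, lamBar q (n q) z / muBar q (n q) z) *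
            ((∏ q, gamBar q (n q) ^ z q) * (gamBar j (n j) ^ z j)⁻¹ *
              (gamBar j' (n j') ^ z j')⁻¹) := fun z t => by
      rw [hw]; ring
    have hgamBar_ne : ∀ q, gamBar q (n q) ≠ 0 := fun q => by
      rw [hgamBar]; exact Finset.prod_ne_zero_iff.2 fun u _ => (hgam q u).ne'
    rw [hw_leap, hw_leap, sum_move j' hyj, h43 y j j' n hyj hjj',
      prod_pow_mul_inv_mul_inv_eq_of_eq_off hgamBar_ne hjj'.symm
        fun q hqj hqj' => (move_apply_of_ne hqj hqj').symm]

/-- Theorem 5.1, zero-range system, closed-open network, detailed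
balance: under conditions (4.2), (4.3) and (5.2), the weights
`w(y,n) = 1(|y|=M) ∏_q [λ̄_q(n_q;y)/μ̄_q(n_q;y)] ∏_q [γ̄_q(n_q)]^{y_q}` satisfy
detailed balance. Here `y : Λ → ℕ` counts distinguished customers per site. -/
theorem zero_range_closed_open_detailed_balance
    (Λ : Type*) [Fintype Λ] [DecidableEq Λ] [Nonempty Λ]
    (M : ℕ) (hM : 1 ≤ M)
    (lam mu : Λ → ℕ → (Λ → ℕ) → ℝ) (gam : Λ → ℕ → ℝ)
    (hlam : ∀ p m y, 0 ≤ lam p m y) (hmu : ∀ p m y, 0 < mu p m y)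
    (hgam : ∀ p m, 0 < gam p m) (hgam0 : ∀ p, gam p 0 = 1)
    (lamBar muBar : Λ → ℕ → (Λ → ℕ) → ℝ) (gamBar : Λ → ℕ → ℝ)
    (hlamBar : ∀ p m y, lamBar p m y = ∏ u ∈ Finset.range m, lam p u y)
    (hmuBar : ∀ p m y, muBar p m y = ∏ u ∈ Finset.range m, mu p (u + 1) y)
    (hgamBar : ∀ p m, gamBar p m = ∏ u ∈ Finset.range m, gam p u)
    (β θ ε : Λ → Λ → ℕ → ℕ → (Λ → ℕ) → ℝ) (τ : Λ → Λ → (Λ → ℕ) → (Λ → ℕ) → ℝ)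
    (hβnn : ∀ k l a b y, 0 ≤ β k l a b y) (hθnn : ∀ j k a b y, 0 ≤ θ j k a b y)
    (hεnn : ∀ i j a b y, 0 ≤ ε i j a b y) (hτnn : ∀ j j' n y, 0 ≤ τ j j' n y)
    -- (4.2a)
    (h42a : ∀ (y : Λ → ℕ) (k l : Λ) (a b : ℕ),
      k ≠ l → y k = 0 → y l = 0 → 1 ≤ a →
      lam k (a - 1) y / mu k a y * β k l a b y =
        lam l b y / mu l (b + 1) y * β l k (b + 1) (a - 1) y)
    -- (4.2b)
    (h42b : ∀ (y : Λ → ℕ) (j k : Λ) (a b : ℕ),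
      1 ≤ y j → y k = 0 → 1 ≤ a →
      lam j (a - 1) y / mu j a y * θ j k a b y =
        lam k b y / mu k (b + 1) y * θ k j (b + 1) (a - 1) y)
    -- (4.3)
    (h43 : ∀ (y : Λ → ℕ) (j j' : Λ) (n : Λ → ℕ),
      1 ≤ y j → j' ≠ j →
      τ j j' n y * ∏ q, lamBar q (n q) y / muBar q (n q) y =
        τ j' j n (move y j j') *
          ∏ q, lamBar q (n q) (move y j j') / muBar q (n q) (move y j j'))
    -- (5.2)
    (h52 : ∀ (y : Λ → ℕ) (i j : Λ) (a b : ℕ),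
      i ≠ j → 1 ≤ y i → 1 ≤ y j → 1 ≤ a →
      lam i (a - 1) y * gam i (a - 1) ^ (y i) / mu i a y * ε i j a b y =
        lam j b y * gam j b ^ (y j) / mu j (b + 1) y * ε j i (b + 1) (a - 1) y)
    (w : (Λ → ℕ) → (Λ → ℕ) → ℝ)
    (hw : ∀ (y n : Λ → ℕ), w y n =
      (if ∑ s, y s = M then (1 : ℝ) else 0) *
        (∏ q, lamBar q (n q) y / muBar q (n q) y) *
        ∏ q, gamBar q (n q) ^ (y q)) :
    ∀ (y n : Λ → ℕ),
      -- (i) arrival at p paired with exit from p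
      (∀ p, w y n * (lam p (n p) y * gam p (n p) ^ (y p)) =
        w y (bump n p) * mu p (n p + 1) y) ∧
      -- (ii) task jump between unloaded sites
      (∀ k l, y k = 0 → y l = 0 → k ≠ l → 1 ≤ n k →
        w y n * β k l (n k) (n l) y =
          w y (move n k l) * β l k (n l + 1) (n k - 1) y) ∧
      -- (iii) task jump between loaded sites
      (∀ i j, 1 ≤ y i → 1 ≤ y j → i ≠ j → 1 ≤ n i →
        w y n * ε i j (n i) (n j) y =
          w y (move n i j) * ε j i (n j + 1) (n i - 1) y) ∧
      -- (iv) task jump from a loaded to an unloaded site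
      (∀ j k, 1 ≤ y j → y k = 0 → 1 ≤ n j →
        w y n * θ j k (n j) (n k) y =
          w y (move n j k) *
            (θ k j (n k + 1) (n j - 1) y * gam j (n j - 1) ^ (y j))) ∧
      -- (v) leap of a distinguished customer
      (∀ j j', 1 ≤ y j → j' ≠ j →
        w y n * (gamBar j (n j) ^ (y j))⁻¹ * τ j j' n y *
            (gamBar j' (n j') ^ (y j'))⁻¹ =
          w (move y j j') n * (gamBar j (n j) ^ (move y j j' j))⁻¹ *
            τ j' j n (move y j j') *
            (gamBar j' (n j') ^ (move y j j' j'))⁻¹) :=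
  zero_range_closed_open_detailed_balance_general Λ M lam mu gam hmu hgam lamBar muBar gamBar
    hlamBar hmuBar hgamBar β θ ε τ h42a h42b h43 h52 w hw
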